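/- arXiv:2506.17809 — 6 statements merged into one kernel-verified Lean document; each statement's English description precedes it below -/
import Mathlib

section
/- Let A, B, C be positive semidefinite matrices with A − B positive semidefinite. Then trace(((A−B)C)²) ≤ trace((AC)²). -/
open Matrix

lemma tr_sq_nonneg {n : ℕ} (M : Matrix (Fin n) (Fin n) ℝ) : 0 ≤ (Mᴴ * M).trace := by
  rw [Matrix.trace]
  refine Finset.sum_nonneg fun i _ => ?_
  rw [Matrix.diag, Matrix.mul_apply]
  refine Finset.sum_nonneg fun j _ => ?_
  simp only [conjTranspose_apply, RCLike.star_def, conj_trivial]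
  exact mul_self_nonneg _

lemma key {n : ℕ} (X Y C : Matrix (Fin n) (Fin n) ℝ)
    (hX : X.PosSemidef) (hY : Y.PosSemidef) (hC : C.PosSemidef) :
    0 ≤ (X * C * Y * C).trace := by
  obtain ⟨P, rfl⟩ := (by open scoped MatrixOrder in exact CStarAlgebra.nonneg_iff_eq_star_mul_self.mp hX.nonneg :
    ∃ P : Matrix (Fin n) (Fin n) ℝ, X = Pᴴ * P)
  obtain ⟨Q, rfl⟩ := (by open scoped MatrixOrder in exact CStarAlgebra.nonneg_iff_eq_star_mul_self.mp hY.nonneg :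
    ∃ P : Matrix (Fin n) (Fin n) ℝ, Y = Pᴴ * P)
  have h : (Pᴴ * P * C * (Qᴴ * Q) * C).trace = ((Q * C * Pᴴ)ᴴ * (Q * C * Pᴴ)).trace := by
    rw [conjTranspose_mul, conjTranspose_mul, conjTranspose_conjTranspose,
      hC.isHermitian.eq]
    rw [show Pᴴ * P * C * (Qᴴ * Q) * C = Pᴴ * (P * (C * Qᴴ) * (Q * C)) from by noncomm_ring,
      Matrix.trace_mul_comm]
    congr 1
    noncomm_ring
  rw [h]
  exact tr_sq_nonneg _

/-- Lemma (ABC): for psd `A`, `B`, `C` with `A - B ⪰ 0`,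
`trace (((A - B) C)²) ≤ trace ((A C)²)`. -/
theorem trace_sq_mono_sub {n : ℕ} (A B C : Matrix (Fin n) (Fin n) ℝ)
    (hA : A.PosSemidef) (hB : B.PosSemidef) (hC : C.PosSemidef)
    (hAB : (A - B).PosSemidef) :
    (((A - B) * C) ^ 2).trace ≤ ((A * C) ^ 2).trace := by
  have hD := hAB
  set D := A - B with hDdef
  have hA' : A = D + B := by simp [hDdef]
  have h1 : 0 ≤ (D * C * B * C).trace := key D B C hD hB hC
  have h2 : 0 ≤ (B * C * D * C).trace := key B D C hB hD hC
  have h3 : 0 ≤ (B * C * B * C).trace := key B B C hB hB hC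
  have expand : ((A * C) ^ 2).trace =
      ((D * C) ^ 2).trace + (D * C * B * C).trace + (B * C * D * C).trace
        + (B * C * B * C).trace := by
    rw [hA']
    simp only [pow_two]
    rw [← Matrix.trace_add, ← Matrix.trace_add, ← Matrix.trace_add]
    congr 1
    noncomm_ring
  linarith
end

section
/- Let F be positive semidefinite, Λ positive definite, and θ a vector with F − ΛθθᵀΛ positive semidefinite. Then trace((((F − ΛθθᵀΛ)(F+Λ)^{-1}))²) ≤ trace((F(F+Λ)^{-1})²). -/
open Matrix

lemma psd_trace_nonneg {n : ℕ} {M : Matrix (Fin n) (Fin n) ℝ} (hM : M.PosSemidef) :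
    0 ≤ M.trace := by
  rw [Matrix.trace]
  apply Finset.sum_nonneg
  intro i _
  have := hM.dotProduct_mulVec_nonneg (Pi.single i 1)
  simpa [Matrix.mulVec_single, dotProduct, Pi.single_apply] using this

lemma psd_trace_mul_nonneg {n : ℕ} {A B : Matrix (Fin n) (Fin n) ℝ}
    (hA : A.PosSemidef) (hB : B.PosSemidef) : 0 ≤ (A * B).trace := by
  open scoped MatrixOrder in
  obtain ⟨C, rfl⟩ := CStarAlgebra.nonneg_iff_eq_star_mul_self.mp hA.nonneg
  rw [Matrix.mul_assoc, Matrix.trace_mul_comm]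
  have := psd_trace_nonneg (hB.mul_mul_conjTranspose_same C)
  simpa [Matrix.mul_assoc, Matrix.star_eq_conjTranspose] using this

/-- If `F ⪰ 0`, `Λ ≻ 0`, and `F - Λθθᵀ Λ ⪰ 0`, then
`trace (((F - ΛθθᵀΛ)(F+Λ)⁻¹)²) ≤ trace ((F (F+Λ)⁻¹)²)`. -/
theorem trace_sq_sub_rankOne_le {n : ℕ} (F Λ : Matrix (Fin n) (Fin n) ℝ) (θ : Fin n → ℝ)
    (hF : F.PosSemidef) (hΛ : Λ.PosDef)
    (hFθ : (F - Λ * Matrix.vecMulVec θ θ * Λ).PosSemidef) :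
    (((F - Λ * Matrix.vecMulVec θ θ * Λ) * (F + Λ)⁻¹) ^ 2).trace
      ≤ ((F * (F + Λ)⁻¹) ^ 2).trace := by
  set G := Λ * Matrix.vecMulVec θ θ * Λ with hGdef
  set S := (F + Λ)⁻¹ with hSdef
  have hFΛ : (F + Λ).PosDef := Matrix.PosDef.posSemidef_add hF hΛ
  have hS : S.PosDef := hFΛ.inv
  have hΛt : Λᵀ = Λ := by simpa using hΛ.isHermitian.eq
  have hG : G.PosSemidef := by
    have h1 : (Matrix.vecMulVec θ θ).PosSemidef := by
      rw [Matrix.vecMulVec_eq Unit, show Matrix.replicateRow Unit θ = (Matrix.replicateCol Unit θ)ᴴ by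
        ext i j; simp [Matrix.replicateRow, Matrix.replicateCol]]
      exact Matrix.posSemidef_conjTranspose_mul_self _
    have := h1.mul_mul_conjTranspose_same Λ
    rw [hGdef, Matrix.mul_assoc]; simpa [hΛt, Matrix.mul_assoc] using this
  -- key nonnegativity: trace (G S A S) ≥ 0 for PSD A
  have key : ∀ A : Matrix (Fin n) (Fin n) ℝ, A.PosSemidef → 0 ≤ (G * S * A * S).trace := by
    intro A hA
    have hSt : Sᵀ = S := by simpa using hS.isHermitian.eq
    have h1 : (S * G * S).PosSemidef := by
      have := hG.mul_mul_conjTranspose_same S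
      simpa [hSt, Matrix.mul_assoc] using this
    calc (0:ℝ) ≤ ((S * G * S) * A).trace := psd_trace_mul_nonneg h1 hA
      _ = (G * S * A * S).trace := by
          conv_rhs => rw [Matrix.trace_mul_comm]
          simp only [Matrix.mul_assoc]
  have expand : ((F * S) ^ 2).trace - (((F - G) * S) ^ 2).trace
      = (G * S * F * S).trace + (G * S * (F - G) * S).trace := by
    have h1 : ((F - G) * S) ^ 2 = F*S*F*S - G*S*F*S - F*S*G*S + G*S*G*S := by
      simp only [pow_two]; noncomm_ring
    have h2 : (F * S) ^ 2 = F*S*F*S := by simp only [pow_two]; noncomm_ring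
    have h3 : (F*S*G*S).trace = (G*S*F*S).trace := by
      rw [show F*S*G*S = (F*S)*(G*S) by noncomm_ring, Matrix.trace_mul_comm]
      noncomm_ring
    have h4 : G*S*(F-G)*S = G*S*F*S - G*S*G*S := by noncomm_ring
    rw [h1, h2, h4]
    simp only [Matrix.trace_sub, Matrix.trace_add, h3]
    ring
  have := add_nonneg (key F hF) (key (F - G) hFθ)
  linarith [expand]
end

section
/- Let F be positive semidefinite, Λ positive definite, θ ∈ ℝⁿ with ‖θ‖² ≤ M. Then θᵀ Λ(F+Λ)^{-1} F(F+Λ)^{-1} Λ θ ≤ M · ‖Λ‖₂, where ‖·‖₂ is the spectral norm. -/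
open Matrix

/-- Spectral norm (operator 2-norm) of a real square matrix. -/
noncomputable def specNorm {n : ℕ} (A : Matrix (Fin n) (Fin n) ℝ) : ℝ :=
  ‖(Matrix.toEuclideanCLM (𝕜 := ℝ) A : EuclideanSpace ℝ (Fin n) →L[ℝ] EuclideanSpace ℝ (Fin n))‖

/-- For `F ⪰ 0`, `Λ ≻ 0` and `‖θ‖² ≤ M`,
`θᵀ Λ (F+Λ)⁻¹ F (F+Λ)⁻¹ Λ θ ≤ M ‖Λ‖₂`. -/
theorem quadratic_form_bound {n : ℕ} (F Λ : Matrix (Fin n) (Fin n) ℝ) (θ : Fin n → ℝ) (M : ℝ)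
    (hF : F.PosSemidef) (hΛ : Λ.PosDef) (hM : 0 ≤ M) (hθ : θ ⬝ᵥ θ ≤ M) :
    θ ⬝ᵥ ((Λ * (F + Λ)⁻¹ * F * (F + Λ)⁻¹ * Λ) *ᵥ θ) ≤ M * specNorm Λ := by
  have hG : (F + Λ).PosDef := Matrix.PosDef.posSemidef_add hF hΛ
  set G := F + Λ with hGdef
  set S := G⁻¹ with hSdef
  have hS : S.PosDef := hG.inv
  have h1 : S * G = 1 := nonsing_inv_mul _ hG.det_pos.ne'.isUnit
  have h2 : G * S = 1 := mul_nonsing_inv _ hG.det_pos.ne'.isUnit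
  have h3 : Λ * Λ⁻¹ = 1 := mul_nonsing_inv _ hΛ.det_pos.ne'.isUnit
  have h4 : Λ⁻¹ * Λ = 1 := nonsing_inv_mul _ hΛ.det_pos.ne'.isUnit
  have r1 : ∀ X : Matrix (Fin n) (Fin n) ℝ, S * (G * X) = X := fun X => by
    rw [← Matrix.mul_assoc, h1, Matrix.one_mul]
  have r2 : ∀ X : Matrix (Fin n) (Fin n) ℝ, G * (S * X) = X := fun X => by
    rw [← Matrix.mul_assoc, h2, Matrix.one_mul]
  have r3 : ∀ X : Matrix (Fin n) (Fin n) ℝ, Λ * (Λ⁻¹ * X) = X := fun X => by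
    rw [← Matrix.mul_assoc, h3, Matrix.one_mul]
  have r4 : ∀ X : Matrix (Fin n) (Fin n) ℝ, Λ⁻¹ * (Λ * X) = X := fun X => by
    rw [← Matrix.mul_assoc, h4, Matrix.one_mul]
  have eF : F = G - Λ := by rw [hGdef]; abel
  -- key matrix identity
  have key : Λ - Λ * S * F * S * Λ = (Λ * S) * (F * Λ⁻¹ * F + F + Λ) * (S * Λ) := by
    rw [eF]
    simp only [Matrix.sub_mul, Matrix.mul_sub, Matrix.add_mul, Matrix.mul_add,
      Matrix.mul_assoc, r1, r2, r3, r4, h1, h2, h3, h4, Matrix.mul_one, Matrix.one_mul]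
    abel
  -- PSD of middle
  have hmidΛ : (F * Λ⁻¹ * F).PosSemidef := by
    have := hΛ.inv.posSemidef.conjTranspose_mul_mul_same F
    rwa [hF.isHermitian.eq] at this
  have hmid : (F * Λ⁻¹ * F + F + Λ).PosSemidef :=
    (hmidΛ.add hF).add hΛ.posSemidef
  have hconjT : (S * Λ)ᴴ = Λ * S := by
    rw [conjTranspose_mul, hS.isHermitian.eq, hΛ.isHermitian.eq]
  have hdiff : (Λ - Λ * S * F * S * Λ).PosSemidef := by
    rw [key, ← hconjT]
    exact hmid.conjTranspose_mul_mul_same (S * Λ)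
  -- quadratic form comparison
  have step1 : θ ⬝ᵥ ((Λ * S * F * S * Λ) *ᵥ θ) ≤ θ ⬝ᵥ (Λ *ᵥ θ) := by
    have h := hdiff.dotProduct_mulVec_nonneg θ
    simp only [star_trivial, Matrix.sub_mulVec, dotProduct_sub] at h
    linarith
  -- spectral norm bound
  have step2 : θ ⬝ᵥ (Λ *ᵥ θ) ≤ M * specNorm Λ := by
    set x : EuclideanSpace ℝ (Fin n) := (WithLp.equiv 2 _).symm θ with hx
    have hTx : toEuclideanCLM (𝕜 := ℝ) Λ x = (WithLp.equiv 2 _).symm (Λ *ᵥ θ) :=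
      toEuclideanCLM_toLp Λ θ
    have hinner : θ ⬝ᵥ (Λ *ᵥ θ) = inner ℝ x (toEuclideanCLM (𝕜 := ℝ) Λ x) := by
      rw [hTx, hx, WithLp.equiv_symm_apply, EuclideanSpace.inner_toLp_toLp, star_trivial, dotProduct_comm]
    have hxx : ‖x‖ ^ 2 = θ ⬝ᵥ θ := by
      rw [← real_inner_self_eq_norm_sq, hx, WithLp.equiv_symm_apply, EuclideanSpace.inner_toLp_toLp, star_trivial]
    have hb : inner ℝ x (toEuclideanCLM (𝕜 := ℝ) Λ x) ≤ specNorm Λ * ‖x‖ ^ 2 := by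
      calc inner ℝ x (toEuclideanCLM (𝕜 := ℝ) Λ x)
          ≤ ‖x‖ * ‖toEuclideanCLM (𝕜 := ℝ) Λ x‖ := real_inner_le_norm _ _
        _ ≤ ‖x‖ * (specNorm Λ * ‖x‖) := by
            exact mul_le_mul_of_nonneg_left ((toEuclideanCLM (𝕜 := ℝ) Λ).le_opNorm x)
              (norm_nonneg _)
        _ = specNorm Λ * ‖x‖ ^ 2 := by ring
    have hsn : 0 ≤ specNorm Λ := norm_nonneg _
    have : ‖x‖ ^ 2 ≤ M := by rw [hxx]; exact hθ
    nlinarith [hinner]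
  calc θ ⬝ᵥ ((Λ * S * F * S * Λ) *ᵥ θ) ≤ θ ⬝ᵥ (Λ *ᵥ θ) := step1
    _ ≤ M * specNorm Λ := step2
end

section
/- Let h : ℝ → ℝ be continuous, concave, and satisfy h(0) = 0, extended to symmetric matrices by applying h to eigenvalues and summing. Then for any finite family X₁,…,X_m of positive semidefinite matrices, h(∑ᵢ Xᵢ) ≤ ∑ᵢ h(Xᵢ). -/
open Matrix

lemma isHermitian_sum_fin {n m : ℕ} (X : Fin m → Matrix (Fin n) (Fin n) ℝ)
    (hX : ∀ i, (X i).IsHermitian) : (∑ i, X i).IsHermitian := by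
  rw [Matrix.IsHermitian, Matrix.conjTranspose_sum]
  exact Finset.sum_congr rfl fun i _ => hX i

lemma sandwich_herm {n : ℕ} (A X : Matrix (Fin n) (Fin n) ℝ)
    (hA : A.IsHermitian) (hX : X.IsHermitian) : (A * X * A).IsHermitian := by
  rw [Matrix.IsHermitian, Matrix.conjTranspose_mul, Matrix.conjTranspose_mul, hA.eq, hX.eq,
    mul_assoc]

lemma diag_herm {n : ℕ} (D : Matrix (Fin n) (Fin n) ℝ) (hD : D.IsDiag) : D.IsHermitian := by
  ext a b
  by_cases hab : a = b
  · subst hab; simp [Matrix.conjTranspose_apply]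
  · simp [Matrix.conjTranspose_apply, hD hab, hD (Ne.symm hab)]

open Finset
open scoped MatrixOrder


set_option synthInstance.maxHeartbeats 1000000
set_option maxHeartbeats 1000000

lemma h_subadd {h : ℝ → ℝ} (hconc : ConcaveOn ℝ Set.univ h) (h0 : h 0 = 0)
    {x y : ℝ} (hx : 0 ≤ x) (hy : 0 ≤ y) : h (x + y) ≤ h x + h y := by
  rcases eq_or_lt_of_le (add_nonneg hx hy) with hs | hs
  · rw [← hs]
    have hx0 : x = 0 := by linarith
    have hy0 : y = 0 := by linarith
    simp [hx0, hy0, h0]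
  · set s := x + y with hsdef
    have hsum : x / s + y / s = 1 := by field_simp; exact hsdef.symm
    have h1 : (x / s) • h s + (y / s) • h 0 ≤ h ((x/s) • s + (y/s) • 0) :=
      hconc.2 (Set.mem_univ s) (Set.mem_univ 0) (by positivity) (by positivity) hsum
    have h2 : (y / s) • h s + (x / s) • h 0 ≤ h ((y/s) • s + (x/s) • 0) :=
      hconc.2 (Set.mem_univ s) (Set.mem_univ 0) (by positivity) (by positivity)
        (by linarith)
    simp only [smul_eq_mul, smul_zero, add_zero, h0, mul_zero] at h1 h2
    have ex : (x / s) * s = x := by field_simp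
    have ey : (y / s) * s = y := by field_simp
    rw [ex] at h1; rw [ey] at h2
    have := add_le_add h1 h2
    calc h s = (x / s + y / s) * h s := by rw [hsum, one_mul]
      _ = x / s * h s + y / s * h s := by ring
      _ ≤ h x + h y := this

lemma h_subadd_sum {h : ℝ → ℝ} (hconc : ConcaveOn ℝ Set.univ h) (h0 : h 0 = 0)
    {ι : Type*} (t : Finset ι) (a : ι → ℝ) (ha : ∀ i ∈ t, 0 ≤ a i) :
    h (∑ i ∈ t, a i) ≤ ∑ i ∈ t, h (a i) := by
  classical
  induction t using Finset.induction with
  | empty => simp [h0]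
  | insert i t hni ih =>
    rw [Finset.sum_insert hni, Finset.sum_insert hni]
    calc h (a i + ∑ j ∈ t, a j)
        ≤ h (a i) + h (∑ j ∈ t, a j) :=
          h_subadd hconc h0 (ha i (mem_insert_self i t))
            (Finset.sum_nonneg fun j hj => ha j (mem_insert_of_mem hj))
      _ ≤ h (a i) + ∑ j ∈ t, h (a j) := by
          gcongr
          exact ih fun j hj => ha j (mem_insert_of_mem hj)

lemma peierls {ι : Type*} [Fintype ι] [DecidableEq ι] {h : ℝ → ℝ}
    (hconc : ConcaveOn ℝ Set.univ h)
    {A : Matrix ι ι ℝ} (hA : A.IsHermitian)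
    (v : OrthonormalBasis ι ℝ (EuclideanSpace ℝ ι)) :
    ∑ k, h (hA.eigenvalues k) ≤ ∑ j, h (⇑(v j) ⬝ᵥ (A *ᵥ ⇑(v j))) := by
  set u := hA.eigenvectorBasis with hu
  set lam := hA.eigenvalues with hlam
  set c : ι → ι → ℝ := fun j k => inner ℝ (u k) (v j) with hc
  set T := Matrix.toEuclideanLin A with hT
  have hTu : ∀ k, T (u k) = lam k • u k := by
    intro k
    have := hA.mulVec_eigenvectorBasis k
    rw [hT, Matrix.toEuclideanLin_apply, this]
    simp; rfl
  have hform : ∀ j, ⇑(v j) ⬝ᵥ (A *ᵥ ⇑(v j)) = ∑ k, c j k ^ 2 * lam k := by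
    intro j
    have hdi : ⇑(v j) ⬝ᵥ (A *ᵥ ⇑(v j)) = (inner ℝ (v j) (T (v j)) : ℝ) := by
      rw [EuclideanSpace.inner_eq_star_dotProduct]
      simp [hT, Matrix.toEuclideanLin_apply]; exact dotProduct_comm _ _
    have hvrep : T (v j) = ∑ k, (c j k * lam k) • u k := by
      conv_lhs => rw [← u.sum_repr' (v j)]
      rw [map_sum]
      refine Finset.sum_congr rfl fun k _ => ?_
      rw [_root_.map_smul, hTu k, smul_smul]
    rw [hdi, hvrep, inner_sum]
    rw [Finset.sum_congr rfl (fun k _ => real_inner_smul_right (v j) (u k) (c j k * lam k))]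
    refine Finset.sum_congr rfl fun k _ => ?_
    have : (inner ℝ (v j) (u k) : ℝ) = c j k := (real_inner_comm (v j) (u k)).symm
    rw [this]; ring
  have hrow : ∀ j, ∑ k, c j k ^ 2 = 1 := by
    intro j
    have hp := u.sum_inner_mul_inner (v j) (v j)
    have h1 : (inner ℝ (v j) (v j) : ℝ) = 1 := by
      rw [real_inner_self_eq_norm_sq, v.orthonormal.1 j]; norm_num
    rw [h1] at hp
    rw [← hp]
    refine Finset.sum_congr rfl fun k _ => ?_
    rw [pow_two, real_inner_comm (u k) (v j)]
  have hcol : ∀ k, ∑ j, c j k ^ 2 = 1 := by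
    intro k
    have hp := v.sum_inner_mul_inner (u k) (u k)
    have h1 : (inner ℝ (u k) (u k) : ℝ) = 1 := by
      rw [real_inner_self_eq_norm_sq, u.orthonormal.1 k]; norm_num
    rw [h1] at hp
    rw [← hp]
    refine Finset.sum_congr rfl fun j _ => ?_
    rw [pow_two, real_inner_comm (u k) (v j)]
  calc ∑ k, h (lam k) = ∑ k, (∑ j, c j k ^ 2) * h (lam k) := by
        refine Finset.sum_congr rfl fun k _ => ?_
        rw [hcol k, one_mul]
    _ = ∑ j, ∑ k, c j k ^ 2 * h (lam k) := by
        simp_rw [Finset.sum_mul]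
        rw [Finset.sum_comm]
    _ ≤ ∑ j, h (∑ k, c j k ^ 2 * lam k) := by
        refine Finset.sum_le_sum fun j _ => ?_
        have := hconc.le_map_sum (t := Finset.univ) (w := fun k => c j k ^ 2)
          (p := lam) (fun k _ => by positivity) (hrow j) (fun k _ => Set.mem_univ _)
        simpa [smul_eq_mul] using this
    _ = ∑ j, h (⇑(v j) ⬝ᵥ (A *ᵥ ⇑(v j))) := by
        refine Finset.sum_congr rfl fun j _ => ?_
        rw [hform j]

open Polynomial in
lemma charmatrix_diag {ι : Type*} [Fintype ι] [DecidableEq ι] (d : ι → ℝ) :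
    charmatrix (diagonal d) = diagonal (fun i => (X : ℝ[X]) - C (d i)) := by
  ext i j
  by_cases hij : i = j
  · subst hij; simp
  · simp [Matrix.charmatrix_apply_ne _ _ _ hij, Matrix.diagonal_apply_ne _ hij,
      Matrix.diagonal_apply_ne d hij]

open Polynomial in
lemma charpoly_conj_diag {ι : Type*} [Fintype ι] [DecidableEq ι]
    (V : Matrix ι ι ℝ) (hV : V * Vᵀ = 1) (d : ι → ℝ) :
    (V * diagonal d * Vᵀ).charpoly = ∏ i, ((X : ℝ[X]) - C (d i)) := by
  set φ := (C : ℝ →+* ℝ[X]).mapMatrix (m := ι) with hφ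
  have hcomm : Matrix.scalar ι (X : ℝ[X]) * φ V = φ V * Matrix.scalar ι (X : ℝ[X]) :=
    (Matrix.scalar_commute (X : ℝ[X]) (fun r' => Commute.all _ _) (φ V)).eq
  have hcm : charmatrix (V * diagonal d * Vᵀ) =
      φ V * charmatrix (diagonal d) * φ Vᵀ := by
    rw [charmatrix, charmatrix]
    have hsc : φ V * Matrix.scalar ι (X : ℝ[X]) * φ Vᵀ = Matrix.scalar ι (X : ℝ[X]) := by
      rw [← hcomm, mul_assoc, ← _root_.map_mul, hV]
      simp [hφ]
    rw [mul_sub, sub_mul, hsc]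
    congr 1
    rw [hφ, _root_.map_mul, _root_.map_mul]
  have h1 : (φ V).det * (φ Vᵀ).det = 1 := by
    rw [← Matrix.det_mul, ← _root_.map_mul, hV]
    simp [hφ]
  rw [Matrix.charpoly, hcm, Matrix.det_mul, Matrix.det_mul, charmatrix_diag,
    Matrix.det_diagonal, mul_right_comm, h1, one_mul]

open Polynomial in
lemma charpoly_hermitian {ι : Type*} [Fintype ι] [DecidableEq ι]
    {A : Matrix ι ι ℝ} (hA : A.IsHermitian) :
    A.charpoly = ∏ i, ((X : ℝ[X]) - C (hA.eigenvalues i)) := by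
  have hsp := hA.spectral_theorem
  have hstar : star (hA.eigenvectorUnitary : Matrix ι ι ℝ)
      = (hA.eigenvectorUnitary : Matrix ι ι ℝ)ᵀ := by
    ext i j
    simp [Matrix.star_apply, Matrix.transpose_apply]
  have hU : (hA.eigenvectorUnitary : Matrix ι ι ℝ)
      * (hA.eigenvectorUnitary : Matrix ι ι ℝ)ᵀ = 1 := by
    rw [← hstar]
    exact (Matrix.mem_unitaryGroup_iff).mp hA.eigenvectorUnitary.2
  have hd : (RCLike.ofReal ∘ hA.eigenvalues : ι → ℝ) = hA.eigenvalues := by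
    funext i
    simp [RCLike.ofReal]
  have hsp' : A = (hA.eigenvectorUnitary : Matrix ι ι ℝ) * Matrix.diagonal hA.eigenvalues
      * (hA.eigenvectorUnitary : Matrix ι ι ℝ)ᵀ := by
    rw [← hstar, ← hd]
    exact hsp
  calc A.charpoly = ((hA.eigenvectorUnitary : Matrix ι ι ℝ) * Matrix.diagonal hA.eigenvalues
      * (hA.eigenvectorUnitary : Matrix ι ι ℝ)ᵀ).charpoly := congrArg _ hsp'
    _ = ∏ i, ((X : ℝ[X]) - C (hA.eigenvalues i)) := charpoly_conj_diag _ hU _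

open Polynomial in
lemma charmatrix_map_ratfunc {ι : Type*} [Fintype ι] [DecidableEq ι]
    (P : Matrix ι ι ℝ) :
    (charmatrix P).map (algebraMap ℝ[X] (RatFunc ℝ)) =
      (algebraMap ℝ[X] (RatFunc ℝ) X) • (1 : Matrix ι ι (RatFunc ℝ))
        - P.map ((algebraMap ℝ[X] (RatFunc ℝ)).comp (C : ℝ →+* ℝ[X])) := by
  ext i j
  by_cases hij : i = j
  · subst hij
    simp [Matrix.charmatrix_apply_eq, Matrix.map_apply, Matrix.one_apply]
  · simp [Matrix.charmatrix_apply_ne _ _ _ hij, Matrix.map_apply, Matrix.one_apply_ne hij,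
      Matrix.smul_apply]

open Polynomial in
lemma charpoly_mul_comm' {ι : Type*} [Fintype ι] [DecidableEq ι] (A B : Matrix ι ι ℝ) :
    (A * B).charpoly = (B * A).charpoly := by
  apply RatFunc.algebraMap_injective ℝ
  set φ := algebraMap ℝ[X] (RatFunc ℝ) with hφ
  set ψ := φ.comp (C : ℝ →+* ℝ[X]) with hψ
  set t : RatFunc ℝ := φ X with ht
  have htne : t ≠ 0 := by
    rw [ht]
    intro hzero
    exact X_ne_zero (RatFunc.algebraMap_injective ℝ (by rw [map_zero]; exact hzero))
  have hmap : ∀ M N : Matrix ι ι ℝ, (M * N).map ψ = M.map ψ * N.map ψ := fun M N => by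
    exact (RingHom.mapMatrix ψ).map_mul M N
  have key : ∀ M N : Matrix ι ι ℝ,
      φ ((M * N).charpoly) = t ^ Fintype.card ι * Matrix.det (1 - t⁻¹ • (M.map ψ * N.map ψ)) := by
    intro M N
    rw [Matrix.charpoly, RingHom.map_det, RingHom.mapMatrix_apply, charmatrix_map_ratfunc, hmap]
    have : t • (1 : Matrix ι ι (RatFunc ℝ)) - M.map ψ * N.map ψ
        = t • (1 - t⁻¹ • (M.map ψ * N.map ψ)) := by
      rw [smul_sub, smul_smul, mul_inv_cancel₀ htne, one_smul]
    rw [this, Matrix.det_smul]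
  rw [key A B, key B A]
  congr 1
  rw [← smul_mul_assoc, Matrix.det_one_sub_mul_comm, mul_smul_comm, ← smul_mul_assoc]

open Polynomial in
lemma sum_map_eq_of_prod_eq {ι : Type*} [Fintype ι] (h : ℝ → ℝ) (a b : ι → ℝ)
    (heq : ∏ i, ((X : ℝ[X]) - C (a i)) = ∏ i, ((X : ℝ[X]) - C (b i))) :
    ∑ i, h (a i) = ∑ i, h (b i) := by
  have hma : (Finset.univ.val.map a) = (Finset.univ.val.map b) := by
    have h1 := roots_multiset_prod_X_sub_C (Finset.univ.val.map a)
    have h2 := roots_multiset_prod_X_sub_C (Finset.univ.val.map b)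
    rw [← h1, ← h2]
    congr 1
    rw [Multiset.map_map, Multiset.map_map]
    calc (Finset.univ.val.map fun i => (X : ℝ[X]) - C (a i)).prod
        = ∏ i, ((X : ℝ[X]) - C (a i)) := rfl
      _ = ∏ i, ((X : ℝ[X]) - C (b i)) := heq
      _ = (Finset.univ.val.map fun i => (X : ℝ[X]) - C (b i)).prod := rfl
  calc ∑ i, h (a i) = ((Finset.univ.val.map a).map h).sum := by
        rw [Multiset.map_map]; rfl
    _ = ((Finset.univ.val.map b).map h).sum := by rw [hma]
    _ = ∑ i, h (b i) := by rw [Multiset.map_map]; rfl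

lemma eig_congr {ι : Type*} [Fintype ι] [DecidableEq ι] {A B : Matrix ι ι ℝ}
    (hAB : A = B) (hA : A.IsHermitian) (hB : B.IsHermitian) :
    hA.eigenvalues = hB.eigenvalues := by
  subst hAB
  rfl

lemma eig_zero {ι : Type*} [Fintype ι] [DecidableEq ι]
    (hz : (0 : Matrix ι ι ℝ).IsHermitian) (j : ι) : hz.eigenvalues j = 0 := by
  have h1 := hz.mulVec_eigenvectorBasis j
  rw [Matrix.zero_mulVec] at h1
  have h2 : (0 : EuclideanSpace ℝ ι) = hz.eigenvalues j • hz.eigenvectorBasis j := by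
    ext i
    exact congrFun h1 i
  have h3 := congrArg norm h2
  rw [norm_zero, norm_smul, hz.eigenvectorBasis.orthonormal.1 j, mul_one] at h3
  simpa using h3.symm

lemma herm_decomp {ι : Type*} [Fintype ι] [DecidableEq ι]
    {A : Matrix ι ι ℝ} (hA : A.IsHermitian) :
    A = (hA.eigenvectorUnitary : Matrix ι ι ℝ) * Matrix.diagonal hA.eigenvalues
        * (hA.eigenvectorUnitary : Matrix ι ι ℝ)ᵀ
      ∧ (hA.eigenvectorUnitary : Matrix ι ι ℝ) * (hA.eigenvectorUnitary : Matrix ι ι ℝ)ᵀ = 1 := by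
  have hstar : star (hA.eigenvectorUnitary : Matrix ι ι ℝ)
      = (hA.eigenvectorUnitary : Matrix ι ι ℝ)ᵀ := by
    ext i j
    simp [Matrix.star_apply, Matrix.transpose_apply]
  have hd : (RCLike.ofReal ∘ hA.eigenvalues : ι → ℝ) = hA.eigenvalues := by
    funext i
    simp [RCLike.ofReal]
  refine ⟨?_, ?_⟩
  · rw [← hstar, ← hd]
    exact hA.spectral_theorem
  · rw [← hstar]
    exact (Matrix.mem_unitaryGroup_iff).mp hA.eigenvectorUnitary.2

lemma qform_eig {ι : Type*} [Fintype ι] [DecidableEq ι]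
    {A : Matrix ι ι ℝ} (hA : A.IsHermitian) (k : ι) :
    ⇑(hA.eigenvectorBasis k) ⬝ᵥ (A *ᵥ ⇑(hA.eigenvectorBasis k)) = hA.eigenvalues k := by
  rw [hA.mulVec_eigenvectorBasis k, dotProduct_smul, smul_eq_mul]
  have h3 : ⇑(hA.eigenvectorBasis k) ⬝ᵥ ⇑(hA.eigenvectorBasis k) = 1 := by
    have h4 : (inner ℝ (hA.eigenvectorBasis k) (hA.eigenvectorBasis k) : ℝ) = 1 := by
      rw [real_inner_self_eq_norm_sq, hA.eigenvectorBasis.orthonormal.1 k]; norm_num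
    rw [EuclideanSpace.inner_eq_star_dotProduct] at h4
    simpa using h4
  rw [h3, mul_one]


/-- Batching for concave trace functions: if `h` is continuous, concave and `h 0 = 0`,
then `h(∑ᵢ Xᵢ) ≤ ∑ᵢ h(Xᵢ)` for psd matrices `Xᵢ`, where `h` is extended to symmetric
matrices by applying it to eigenvalues and summing. -/
theorem traceFun_sum_le {n m : ℕ} (h : ℝ → ℝ) (hc : Continuous h)
    (hconc : ConcaveOn ℝ Set.univ h) (h0 : h 0 = 0)
    (X : Fin m → Matrix (Fin n) (Fin n) ℝ) (hX : ∀ i, (X i).PosSemidef) :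
    ∑ j, h ((isHermitian_sum_fin X fun i => (hX i).isHermitian).eigenvalues j)
      ≤ ∑ i, ∑ j, h ((hX i).isHermitian.eigenvalues j) := by
  classical
  have hS : (∑ i, X i).IsHermitian := isHermitian_sum_fin X fun i => (hX i).isHermitian
  show ∑ j, h (hS.eigenvalues j) ≤ ∑ i, ∑ j, h ((hX i).isHermitian.eigenvalues j)
  rcases Nat.eq_zero_or_pos m with hm | hm
  · subst hm
    have hzero : (∑ i : Fin 0, X i) = 0 := by simp
    have heig : ∀ j, hS.eigenvalues j = 0 := by
      intro j
      rw [eig_congr hzero hS Matrix.isHermitian_zero]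
      exact eig_zero _ j
    calc ∑ j, h (hS.eigenvalues j) = 0 := Finset.sum_eq_zero fun j _ => by rw [heig j, h0]
      _ ≤ _ := by simp
  · set i0 : Fin m := ⟨0, hm⟩ with hi0
    set S := ∑ i, X i with hSdef
    set sq : Fin m → Matrix (Fin n) (Fin n) ℝ := fun i => CFC.sqrt (X i) with hsqdef
    have hsqh : ∀ i, (sq i).IsHermitian := fun i => (CFC.sqrt_nonneg (X i)).posSemidef.1
    have hsqs : ∀ i r s, sq i r s = sq i s r := by
      intro i r s
      have := (hsqh i).apply s r
      simpa using this
    have hsqm : ∀ i, sq i * sq i = X i := fun i => CFC.sqrt_mul_sqrt_self (X i) (hX i).nonneg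
    set R : Matrix ((i : Fin m) × Fin n) ((i : Fin m) × Fin n) ℝ :=
      fun J K => if K.1 = i0 then sq J.1 J.2 K.2 else 0 with hR
    obtain ⟨hSpec, hUU⟩ := herm_decomp hS
    set U : Matrix (Fin n) (Fin n) ℝ := (hS.eigenvectorUnitary : Matrix (Fin n) (Fin n) ℝ)
      with hUdef
    set V : Matrix ((i : Fin m) × Fin n) ((i : Fin m) × Fin n) ℝ :=
      Matrix.blockDiagonal' (fun l => if l = i0 then U else 1) with hVdef
    set d : ((i : Fin m) × Fin n) → ℝ :=
      fun J => if J.1 = i0 then hS.eigenvalues J.2 else 0 with hd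
    have hVV : V * Vᵀ = 1 := by
      rw [hVdef, Matrix.blockDiagonal'_transpose, ← Matrix.blockDiagonal'_mul]
      have hfun : (fun k => (if k = i0 then U else 1) * (if k = i0 then U else 1)ᵀ)
          = (1 : ∀ _ : Fin m, Matrix (Fin n) (Fin n) ℝ) := by
        funext k
        by_cases hk : k = i0
        · simp [hk, hUU]
        · simp [hk]
      rw [hfun, Matrix.blockDiagonal'_one]
    have hVdV : V * Matrix.diagonal d * Vᵀ = Rᵀ * R := by
      have hdiag : Matrix.diagonal d
          = Matrix.blockDiagonal' (fun l => if l = i0 then Matrix.diagonal hS.eigenvalues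
              else 0) := by
        have hfun : (fun l => if l = i0 then Matrix.diagonal hS.eigenvalues
            else (0 : Matrix (Fin n) (Fin n) ℝ))
            = fun l => Matrix.diagonal (fun s => if l = i0 then hS.eigenvalues s else 0) := by
          funext l
          by_cases hl : l = i0
          · simp [hl]
          · simp [hl]
        rw [hfun, Matrix.blockDiagonal'_diagonal]
      rw [hVdef, hdiag, Matrix.blockDiagonal'_transpose, ← Matrix.blockDiagonal'_mul,
        ← Matrix.blockDiagonal'_mul]
      have hfun2 : (fun k => (if k = i0 then U else 1)
            * (if k = i0 then Matrix.diagonal hS.eigenvalues else 0)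
            * ((if k = i0 then U else 1))ᵀ)
          = fun k => if k = i0 then S else (0 : Matrix (Fin n) (Fin n) ℝ) := by
        funext k
        by_cases hk : k = i0
        · simp only [hk, if_true, eq_self_iff_true]
          exact hSpec.symm
        · simp [hk]
      rw [hfun2]
      ext ⟨j, s⟩ ⟨j', s'⟩
      rw [Matrix.mul_apply]
      simp only [Matrix.transpose_apply]
      simp only [hR]
      by_cases hj : j = i0
      · by_cases hj' : j' = i0
        · simp only [hj, hj', eq_self_iff_true, if_true]
          rw [Matrix.blockDiagonal'_apply_eq]
          simp only [eq_self_iff_true, if_true]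
          rw [← Finset.univ_sigma_univ, Finset.sum_sigma]
          rw [hSdef, Matrix.sum_apply]
          refine Finset.sum_congr rfl fun l _ => ?_
          rw [← hsqm l, Matrix.mul_apply]
          refine Finset.sum_congr rfl fun t _ => ?_
          rw [hsqs l s t]
        · rw [Matrix.blockDiagonal'_apply_ne _ _ _ (show j ≠ j' from fun he => hj' (he ▸ hj))]
          simp [hj']
      · have hLHS0 : Matrix.blockDiagonal' (fun k => if k = i0 then S else 0)
            ⟨j, s⟩ ⟨j', s'⟩ = 0 := by
          by_cases hjj : j = j'
          · subst hjj
            rw [Matrix.blockDiagonal'_apply_eq]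
            simp [hj]
          · rw [Matrix.blockDiagonal'_apply_ne _ _ _ hjj]
        rw [hLHS0]
        simp [hj]
    have hM1herm : (R * Rᵀ).IsHermitian := by
      have : Rᴴ = Rᵀ := by
        ext i j
        simp [Matrix.conjTranspose_apply]
      rw [show R * Rᵀ = R * Rᴴ by rw [this]]
      exact Matrix.isHermitian_mul_conjTranspose_self R
    have hchain : ∑ J, h (d J) = ∑ J, h (hM1herm.eigenvalues J) := by
      refine sum_map_eq_of_prod_eq h d _ ?_
      calc ∏ J, (Polynomial.X - Polynomial.C (d J)) = (V * Matrix.diagonal d * Vᵀ).charpoly :=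
            (charpoly_conj_diag V hVV d).symm
        _ = (Rᵀ * R).charpoly := by rw [hVdV]
        _ = (R * Rᵀ).charpoly := charpoly_mul_comm' Rᵀ R
        _ = ∏ J, (Polynomial.X - Polynomial.C (hM1herm.eigenvalues J)) := charpoly_hermitian hM1herm
    have hLHS : ∑ j, h (hS.eigenvalues j) = ∑ J : (i : Fin m) × Fin n, h (d J) := by
      rw [← Finset.univ_sigma_univ, Finset.sum_sigma]
      rw [Finset.sum_eq_single i0]
      · simp [hd]
      · intro l _ hl
        simp [hd, hl, h0]
      · intro habs
        exact absurd (Finset.mem_univ i0) habs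
    set u : ∀ i : Fin m, OrthonormalBasis (Fin n) ℝ (EuclideanSpace ℝ (Fin n)) :=
      fun i => (hX i).isHermitian.eigenvectorBasis with hu
    set v : OrthonormalBasis ((i : Fin m) × Fin n) ℝ (EuclideanSpace ℝ ((i : Fin m) × Fin n)) :=
      (Pi.orthonormalBasis u).map
        ((LinearIsometryEquiv.piLpCurry ℝ 2 (fun (_ : Fin m) (_ : Fin n) => ℝ)).symm) with hv
    have hvapp : ∀ (J K : (i : Fin m) × Fin n),
        (v J) K = if K.1 = J.1 then u J.1 J.2 K.2 else 0 := by
      intro J K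
      obtain ⟨i, k⟩ := J
      obtain ⟨l, r⟩ := K
      rw [hv, OrthonormalBasis.map_apply, Pi.orthonormalBasis_apply,
        LinearIsometryEquiv.piLpCurry_symm_apply]
      by_cases hl : l = i
      · subst hl
        simp [Sigma.uncurry, Pi.single_apply]
      · simp [Sigma.uncurry, Pi.single_apply, hl]
    have hq : ∀ J : (i : Fin m) × Fin n,
        ⇑(v J) ⬝ᵥ ((R * Rᵀ) *ᵥ ⇑(v J)) = (hX J.1).isHermitian.eigenvalues J.2 := by
      have hM1e : ∀ K L : (i : Fin m) × Fin n,
          (R * Rᵀ) K L = (sq K.1 * sq L.1) K.2 L.2 := by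
        intro K L
        rw [Matrix.mul_apply]
        simp only [Matrix.transpose_apply, hR]
        rw [← Finset.univ_sigma_univ, Finset.sum_sigma]
        calc ∑ l, ∑ t, (if (⟨l, t⟩ : (i : Fin m) × Fin n).1 = i0 then sq K.1 K.2 t else 0)
              * (if (⟨l, t⟩ : (i : Fin m) × Fin n).1 = i0 then sq L.1 L.2 t else 0)
            = ∑ l, ∑ t : Fin n, (if l = i0 then sq K.1 K.2 t * sq L.1 L.2 t else 0) := by
              refine Finset.sum_congr rfl fun l _ => Finset.sum_congr rfl fun t _ => ?_
              by_cases hl : l = i0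
              · simp [hl]
              · simp [hl]
          _ = ∑ t, sq K.1 K.2 t * sq L.1 L.2 t := by
              rw [Finset.sum_comm]
              refine Finset.sum_congr rfl fun t _ => ?_
              simp
          _ = (sq K.1 * sq L.1) K.2 L.2 := by
              rw [Matrix.mul_apply]
              refine Finset.sum_congr rfl fun t _ => ?_
              rw [hsqs L.1 L.2 t]
      intro J
      obtain ⟨i, k⟩ := J
      show (⇑(v ⟨i, k⟩) ⬝ᵥ ((R * Rᵀ) *ᵥ ⇑(v ⟨i, k⟩))) = (hX i).isHermitian.eigenvalues k
      have hexp : ⇑(v ⟨i, k⟩) ⬝ᵥ ((R * Rᵀ) *ᵥ ⇑(v ⟨i, k⟩))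
          = ⇑(u i k) ⬝ᵥ (X i *ᵥ ⇑(u i k)) := by
        simp only [dotProduct, Matrix.mulVec]
        rw [← Finset.univ_sigma_univ, Finset.sum_sigma]
        have inner_eq : ∀ L : (i : Fin m) × Fin n,
            (∑ K : (i : Fin m) × Fin n, (R * Rᵀ) L K * (v ⟨i, k⟩) K)
              = ∑ t, (sq L.1 * sq i) L.2 t * u i k t := by
          intro L
          rw [← Finset.univ_sigma_univ, Finset.sum_sigma]
          calc ∑ l, ∑ t, (R * Rᵀ) L ⟨l, t⟩ * (v ⟨i, k⟩) ⟨l, t⟩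
              = ∑ l, ∑ t : Fin n, (if l = i then (sq L.1 * sq l) L.2 t * u i k t else 0) := by
                refine Finset.sum_congr rfl fun l _ => Finset.sum_congr rfl fun t _ => ?_
                rw [hM1e, hvapp]
                by_cases hl : l = i
                · simp [hl]
                · simp [hl]
            _ = ∑ t, (sq L.1 * sq i) L.2 t * u i k t := by
                rw [Finset.sum_comm]
                refine Finset.sum_congr rfl fun t _ => ?_
                simp
        calc ∑ l, ∑ r, (v ⟨i, k⟩) ⟨l, r⟩ * (∑ K, (R * Rᵀ) ⟨l, r⟩ K * (v ⟨i, k⟩) K)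
            = ∑ l, ∑ r : Fin n,
                (if l = i then u i k r * ∑ t, (sq i * sq i) r t * u i k t else 0) := by
              refine Finset.sum_congr rfl fun l _ => Finset.sum_congr rfl fun r _ => ?_
              rw [inner_eq, hvapp]
              by_cases hl : l = i
              · subst hl
                simp
              · simp [hl]
          _ = ∑ r, u i k r * ∑ t, (sq i * sq i) r t * u i k t := by
              rw [Finset.sum_comm]
              refine Finset.sum_congr rfl fun r _ => ?_
              simp
          _ = ∑ r, u i k r * ∑ t, X i r t * u i k t := by
              refine Finset.sum_congr rfl fun r _ => ?_
              rw [hsqm i]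
      rw [hexp, hu]
      exact qform_eig (hX i).isHermitian k
    calc ∑ j, h (hS.eigenvalues j) = ∑ J, h (d J) := hLHS
      _ = ∑ J, h (hM1herm.eigenvalues J) := hchain
      _ ≤ ∑ J, h (⇑(v J) ⬝ᵥ ((R * Rᵀ) *ᵥ ⇑(v J))) := peierls hconc hM1herm v
      _ = ∑ J : (i : Fin m) × Fin n, h ((hX J.1).isHermitian.eigenvalues J.2) := by
          exact Finset.sum_congr rfl fun J _ => by rw [hq J]
      _ = ∑ i, ∑ j, h ((hX i).isHermitian.eigenvalues j) := by
          rw [← Finset.univ_sigma_univ, Finset.sum_sigma]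
end

section
/- Let h : ℝ → ℝ be continuous and concave, extended to symmetric matrices as a trace function over eigenvalues. Let P be a pinching (block-diagonal restriction) operator. Then for any symmetric X, the trace function satisfies h(X) ≤ h(P(X)). -/
open Matrix

lemma entry_ADAstar {n : ℕ} (A : Matrix (Fin n) (Fin n) ℝ) (d : Fin n → ℝ) (k : Fin n) :
    (A * diagonal d * Aᴴ) k k = ∑ j, (A k j)^2 * d j := by
  rw [Matrix.mul_apply]
  refine Finset.sum_congr rfl fun j _ => ?_
  simp [Matrix.mul_diagonal, Matrix.conjTranspose_apply]
  ring

lemma entry_AAstar {n : ℕ} (A : Matrix (Fin n) (Fin n) ℝ) (k : Fin n) :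
    (A * Aᴴ) k k = ∑ j, (A k j)^2 := by
  simp [Matrix.mul_apply, Matrix.conjTranspose_apply, sq]

lemma entry_AstarA {n : ℕ} (A : Matrix (Fin n) (Fin n) ℝ) (j : Fin n) :
    (Aᴴ * A) j j = ∑ k, (A k j)^2 := by
  simp [Matrix.mul_apply, Matrix.conjTranspose_apply, sq]

lemma jensen_aux {n : ℕ} (h : ℝ → ℝ) (hconc : ConcaveOn ℝ Set.univ h)
    (lam mu : Fin n → ℝ) (B : Matrix (Fin n) (Fin n) ℝ)
    (hB0 : ∀ k j, 0 ≤ B k j) (hrow : ∀ k, ∑ j, B k j = 1)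
    (hcol : ∀ j, ∑ k, B k j = 1) (hmu : ∀ k, mu k = ∑ j, B k j * lam j) :
    ∑ j, h (lam j) ≤ ∑ k, h (mu k) := by
  have key : ∀ k, ∑ j, B k j * h (lam j) ≤ h (mu k) := by
    intro k
    rw [hmu k]
    have := hconc.le_map_sum (t := Finset.univ) (w := fun j => B k j) (p := lam)
      (fun j _ => hB0 k j) (hrow k) (fun j _ => Set.mem_univ _)
    simpa using this
  calc ∑ j, h (lam j) = ∑ j, (∑ k, B k j) * h (lam j) := by
        refine Finset.sum_congr rfl fun j _ => by rw [hcol j, one_mul]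
    _ = ∑ k, ∑ j, B k j * h (lam j) := by
        rw [Finset.sum_comm]
        exact Finset.sum_congr rfl fun j _ => by rw [Finset.sum_mul]
    _ ≤ ∑ k, h (mu k) := Finset.sum_le_sum fun k _ => key k

/-- Pinching inequality for concave trace functions: for a pinching
`P(X) = ∑ᵢ Dᵢ X Dᵢ` given by diagonal 0/1 orthogonal projections `Dᵢ` summing to `I`,
and a continuous concave `h` extended to symmetric matrices via eigenvalues,
`h(X) ≤ h(P(X))` for every symmetric `X`. -/
theorem traceFun_le_pinch {n m : ℕ} (h : ℝ → ℝ) (hc : Continuous h)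
    (hconc : ConcaveOn ℝ Set.univ h)
    (D : Fin m → Matrix (Fin n) (Fin n) ℝ)
    (hdiag : ∀ i, (D i).IsDiag)
    (h01 : ∀ i k, D i k k = 0 ∨ D i k k = 1)
    (hsum : ∑ i, D i = 1)
    (horth : ∀ i j, i ≠ j → D i * D j = 0)
    (X : Matrix (Fin n) (Fin n) ℝ) (hX : X.IsHermitian) :
    ∑ j, h (hX.eigenvalues j)
      ≤ ∑ j, h ((isHermitian_sum_fin (fun i => D i * X * D i)
          (fun i => sandwich_herm (D i) X (diag_herm (D i) (hdiag i)) hX)).eigenvalues j) := by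
  classical
  set hY := isHermitian_sum_fin (fun i => D i * X * D i)
      (fun i => sandwich_herm (D i) X (diag_herm (D i) (hdiag i)) hX) with hYdef
  set U : Matrix (Fin n) (Fin n) ℝ := (hX.eigenvectorUnitary : Matrix (Fin n) (Fin n) ℝ) with hUdef
  set V : Matrix (Fin n) (Fin n) ℝ := (hY.eigenvectorUnitary : Matrix (Fin n) (Fin n) ℝ) with hVdef
  have hU1 : U * Uᴴ = 1 := by
    have := Matrix.mem_unitaryGroup_iff.mp hX.eigenvectorUnitary.2
    simpa [Matrix.star_eq_conjTranspose] using this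
  have hU2 : Uᴴ * U = 1 := by
    have := Matrix.mem_unitaryGroup_iff'.mp hX.eigenvectorUnitary.2
    simpa [Matrix.star_eq_conjTranspose] using this
  have hV1 : V * Vᴴ = 1 := by
    have := Matrix.mem_unitaryGroup_iff.mp hY.eigenvectorUnitary.2
    simpa [Matrix.star_eq_conjTranspose] using this
  have hV2 : Vᴴ * V = 1 := by
    have := Matrix.mem_unitaryGroup_iff'.mp hY.eigenvectorUnitary.2
    simpa [Matrix.star_eq_conjTranspose] using this
  have hXspec : X = U * diagonal hX.eigenvalues * Uᴴ := by
    have := hX.spectral_theorem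
    simpa [Matrix.star_eq_conjTranspose, Function.comp] using this
  have hdiagY : Vᴴ * (∑ i, D i * X * D i) * V = diagonal hY.eigenvalues := by
    have := hY.conjStarAlgAut_star_eigenvectorUnitary
    simpa [Matrix.star_eq_conjTranspose, Function.comp, Matrix.mul_sum, Matrix.sum_mul] using this
  have hDstar : ∀ i, (D i)ᴴ = D i := fun i => diag_herm (D i) (hdiag i)
  have hDD : ∀ i, D i * D i = D i := by
    intro i
    have h2 : (fun k => (D i).diag k * (D i).diag k) = (D i).diag := by
      funext k
      rcases h01 i k with hk | hk <;> simp [Matrix.diag, hk]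
    conv_lhs => rw [← (hdiag i).diagonal_diag]
    rw [Matrix.diagonal_mul_diagonal, h2, (hdiag i).diagonal_diag]
  set N : Fin m → Matrix (Fin n) (Fin n) ℝ := fun i => Vᴴ * D i * U with hNdef
  have hDT : ∀ i, (D i)ᵀ = D i := by
    intro i
    have := hDstar i
    simpa using this
  have hNstar : ∀ i, (N i)ᴴ = Uᴴ * D i * V := by
    intro i
    simp [hNdef, Matrix.conjTranspose_mul, hDstar i, hDT i, Matrix.mul_assoc]
  set B : Fin n → Fin n → ℝ := fun k j => ∑ i, (N i k j)^2 with hBdef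
  have hB0 : ∀ k j, 0 ≤ B k j := fun k j => Finset.sum_nonneg fun i _ => sq_nonneg _
  have hNN : ∀ i, N i * (N i)ᴴ = Vᴴ * D i * V := by
    intro i
    rw [hNstar i, hNdef]
    simp only [Matrix.mul_assoc]
    rw [← Matrix.mul_assoc U Uᴴ, hU1, Matrix.one_mul, ← Matrix.mul_assoc (D i) (D i), hDD i]
  have hNN' : ∀ i, (N i)ᴴ * N i = Uᴴ * D i * U := by
    intro i
    rw [hNstar i, hNdef]
    simp only [Matrix.mul_assoc]
    rw [← Matrix.mul_assoc V Vᴴ, hV1, Matrix.one_mul, ← Matrix.mul_assoc (D i) (D i), hDD i]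
  have hrow : ∀ k, ∑ j, B k j = 1 := by
    intro k
    have : ∑ j, B k j = ∑ i, (N i * (N i)ᴴ) k k := by
      simp only [hBdef]
      rw [Finset.sum_comm]
      exact Finset.sum_congr rfl fun i _ => (entry_AAstar (N i) k).symm
    rw [this]
    have : ∑ i, (N i * (N i)ᴴ) k k = (Vᴴ * (∑ i, D i) * V) k k := by
      rw [Matrix.mul_sum, Matrix.sum_mul, Matrix.sum_apply]
      exact Finset.sum_congr rfl fun i _ => by rw [hNN i]
    rw [this, hsum, Matrix.mul_one, hV2, Matrix.one_apply_eq]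
  have hcol : ∀ j, ∑ k, B k j = 1 := by
    intro j
    have : ∑ k, B k j = ∑ i, ((N i)ᴴ * N i) j j := by
      simp only [hBdef]
      rw [Finset.sum_comm]
      exact Finset.sum_congr rfl fun i _ => (entry_AstarA (N i) j).symm
    rw [this]
    have : ∑ i, ((N i)ᴴ * N i) j j = (Uᴴ * (∑ i, D i) * U) j j := by
      rw [Matrix.mul_sum, Matrix.sum_mul, Matrix.sum_apply]
      exact Finset.sum_congr rfl fun i _ => by rw [hNN' i]
    rw [this, hsum, Matrix.mul_one, hU2, Matrix.one_apply_eq]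
  have hdiagsum : diagonal hY.eigenvalues = ∑ i, N i * diagonal hX.eigenvalues * (N i)ᴴ := by
    rw [← hdiagY, Matrix.mul_sum, Matrix.sum_mul]
    refine Finset.sum_congr rfl fun i _ => ?_
    conv_lhs => rw [hXspec]
    rw [hNstar i]
    simp only [hNdef, Matrix.mul_assoc]
  have hmu : ∀ k, hY.eigenvalues k = ∑ j, B k j * hX.eigenvalues j := by
    intro k
    have h1 : hY.eigenvalues k = ∑ i, (N i * diagonal hX.eigenvalues * (N i)ᴴ) k k := by
      rw [← Matrix.sum_apply, ← hdiagsum, Matrix.diagonal_apply_eq]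
    rw [h1]
    have h2 : ∀ i, (N i * diagonal hX.eigenvalues * (N i)ᴴ) k k
        = ∑ j, (N i k j)^2 * hX.eigenvalues j := fun i => entry_ADAstar (N i) _ k
    calc ∑ i, (N i * diagonal hX.eigenvalues * (N i)ᴴ) k k
        = ∑ i, ∑ j, (N i k j)^2 * hX.eigenvalues j := Finset.sum_congr rfl fun i _ => h2 i
      _ = ∑ j, ∑ i, (N i k j)^2 * hX.eigenvalues j := Finset.sum_comm
      _ = ∑ j, B k j * hX.eigenvalues j := by
          refine Finset.sum_congr rfl fun j _ => ?_
          simp only [hBdef]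
          rw [Finset.sum_mul]
  exact jensen_aux h hconc hX.eigenvalues hY.eigenvalues (Matrix.of B) hB0 hrow hcol hmu
end

section
/- Let h : ℝ → ℝ be continuous and concave, extended to symmetric matrices as a trace function, let P be a pinching operator, and let A be a symmetric matrix with A = P(A) (i.e., A is block diagonal). Then for all symmetric X, h(AXA) ≤ h(A·P(X)·A). -/
open Matrix

lemma eig_congr_s13 {n : ℕ} {B C : Matrix (Fin n) (Fin n) ℝ} (hB : B.IsHermitian)
    (hC : C.IsHermitian) (e : B = C) : hB.eigenvalues = hC.eigenvalues := by
  subst e; rfl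

lemma pinch_trace_le {n m : ℕ} (h : ℝ → ℝ) (hconc : ConcaveOn ℝ Set.univ h)
    (D : Fin m → Matrix (Fin n) (Fin n) ℝ)
    (hD : ∀ i, (D i).IsHermitian)
    (hDD : ∑ i, D i * D i = 1)
    (Y : Matrix (Fin n) (Fin n) ℝ) (hY : Y.IsHermitian)
    (hPY : (∑ i, D i * Y * D i).IsHermitian) :
    ∑ j, h (hY.eigenvalues j) ≤ ∑ j, h (hPY.eigenvalues j) := by
  classical
  set U := (hPY.eigenvectorUnitary : Matrix (Fin n) (Fin n) ℝ) with hUdef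
  set V := (hY.eigenvectorUnitary : Matrix (Fin n) (Fin n) ℝ) with hVdef
  have hUl : star U * U = 1 := Matrix.mem_unitaryGroup_iff'.mp hPY.eigenvectorUnitary.2
  have hUr : U * star U = 1 := Matrix.mem_unitaryGroup_iff.mp hPY.eigenvectorUnitary.2
  have hVl : star V * V = 1 := Matrix.mem_unitaryGroup_iff'.mp hY.eigenvectorUnitary.2
  have hVr : V * star V = 1 := Matrix.mem_unitaryGroup_iff.mp hY.eigenvectorUnitary.2
  set lam := hY.eigenvalues with hlam
  set mu := hPY.eigenvalues with hmu
  have hSpecY : Y = V * diagonal lam * star V := by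
    have := hY.spectral_theorem
    rwa [RCLike.ofReal_real_eq_id, Function.id_comp] at this
  have hdiagmu : star U * (∑ i, D i * Y * D i) * U = diagonal mu := by
    have := hPY.conjStarAlgAut_star_eigenvectorUnitary
    rwa [Unitary.conjStarAlgAut_star_apply, RCLike.ofReal_real_eq_id, Function.id_comp] at this
  set M : Fin m → Matrix (Fin n) (Fin n) ℝ := fun i => star U * D i * V with hM
  have hDs : ∀ i, star (D i) = D i := fun i => (hD i).eq
  have hMstar : ∀ i, star (M i) = star V * D i * U := by
    intro i
    simp only [hM, StarMul.star_mul, star_star, hDs]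
    rw [mul_assoc]
  set S : Matrix (Fin n) (Fin n) ℝ := Matrix.of fun j k => ∑ i, (M i j k) ^ 2 with hS
  have hSnn : ∀ j k, 0 ≤ S j k := by
    intro j k
    simp only [hS, Matrix.of_apply]
    exact Finset.sum_nonneg fun i _ => sq_nonneg _
  -- row sums
  have hMMr : ∑ i, M i * star (M i) = 1 := by
    have : ∀ i, M i * star (M i) = star U * (D i * D i) * U := by
      intro i
      rw [hMstar i]
      simp only [hM]
      have h1 : star U * D i * V * (star V * D i * U)
          = star U * D i * (V * star V) * (D i * U) := by noncomm_ring
      rw [h1, hVr, Matrix.mul_one]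
      noncomm_ring
    rw [Finset.sum_congr rfl fun i _ => this i]
    rw [← Finset.sum_mul, ← Finset.mul_sum, hDD, mul_one, hUl]
  have hMMc : ∑ i, star (M i) * M i = 1 := by
    have : ∀ i, star (M i) * M i = star V * (D i * D i) * V := by
      intro i
      rw [hMstar i]
      simp only [hM]
      have h1 : star V * D i * U * (star U * D i * V)
          = star V * D i * (U * star U) * (D i * V) := by noncomm_ring
      rw [h1, hUr, Matrix.mul_one]
      noncomm_ring
    rw [Finset.sum_congr rfl fun i _ => this i]
    rw [← Finset.sum_mul, ← Finset.mul_sum, hDD, mul_one, hVl]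
  have hrow : ∀ j, ∑ k, S j k = 1 := by
    intro j
    have h1 : (∑ i, M i * star (M i)) j j = (1 : Matrix (Fin n) (Fin n) ℝ) j j := by rw [hMMr]
    rw [Matrix.sum_apply, Matrix.one_apply_eq] at h1
    calc ∑ k, S j k = ∑ k, ∑ i, (M i j k)^2 := rfl
      _ = ∑ i, ∑ k, (M i j k)^2 := Finset.sum_comm
      _ = ∑ i, (M i * star (M i)) j j := by
          refine Finset.sum_congr rfl fun i _ => ?_
          rw [Matrix.mul_apply]
          exact Finset.sum_congr rfl fun k _ => by rw [Matrix.star_apply, star_trivial]; ring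
      _ = 1 := h1
  have hcol : ∀ k, ∑ j, S j k = 1 := by
    intro k
    have h1 : (∑ i, star (M i) * M i) k k = (1 : Matrix (Fin n) (Fin n) ℝ) k k := by rw [hMMc]
    rw [Matrix.sum_apply, Matrix.one_apply_eq] at h1
    calc ∑ j, S j k = ∑ j, ∑ i, (M i j k)^2 := rfl
      _ = ∑ i, ∑ j, (M i j k)^2 := Finset.sum_comm
      _ = ∑ i, (star (M i) * M i) k k := by
          refine Finset.sum_congr rfl fun i _ => ?_
          rw [Matrix.mul_apply]
          exact Finset.sum_congr rfl fun j _ => by rw [Matrix.star_apply, star_trivial]; ring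
      _ = 1 := h1
  have hmuS : ∀ j, mu j = ∑ k, S j k * lam k := by
    intro j
    have key : ∀ i, star U * (D i * Y * D i) * U = M i * diagonal lam * star (M i) := by
      intro i
      rw [hSpecY, hMstar i]
      simp only [hM]
      noncomm_ring
    have h1 : diagonal mu = ∑ i, M i * diagonal lam * star (M i) := by
      rw [← hdiagmu]
      rw [Finset.mul_sum, Finset.sum_mul]
      exact Finset.sum_congr rfl fun i _ => key i
    have h2 : mu j = (∑ i, M i * diagonal lam * star (M i)) j j := by
      rw [← h1, Matrix.diagonal_apply_eq]
    rw [h2, Matrix.sum_apply]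
    have h3 : ∀ i, (M i * diagonal lam * star (M i)) j j = ∑ k, (M i j k)^2 * lam k := by
      intro i
      rw [Matrix.mul_apply]
      refine Finset.sum_congr rfl fun k _ => ?_
      rw [Matrix.mul_diagonal, Matrix.star_apply, star_trivial]
      ring
    rw [Finset.sum_congr rfl fun i _ => h3 i, Finset.sum_comm]
    refine Finset.sum_congr rfl fun k _ => ?_
    rw [← Finset.sum_mul]
    rfl
  -- Jensen per row
  have jensen : ∀ j, ∑ k, S j k * h (lam k) ≤ h (mu j) := by
    intro j
    have := hconc.le_map_sum (t := Finset.univ) (w := fun k => S j k) (p := lam)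
      (fun k _ => hSnn j k) (hrow j) (fun k _ => Set.mem_univ _)
    simp only [smul_eq_mul] at this
    rw [hmuS j]
    convert this using 2
  calc ∑ j, h (lam j) = ∑ k, (∑ j, S j k) * h (lam k) := by
        refine Finset.sum_congr rfl fun k _ => ?_
        rw [hcol k, one_mul]
    _ = ∑ k, ∑ j, S j k * h (lam k) := by
        refine Finset.sum_congr rfl fun k _ => ?_
        rw [Finset.sum_mul]
    _ = ∑ j, ∑ k, S j k * h (lam k) := Finset.sum_comm
    _ ≤ ∑ j, h (mu j) := Finset.sum_le_sum fun j _ => jensen j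

/-- Theorem (block diagonal bound for concave trace functions): for a continuous concave
`h` extended to symmetric matrices via eigenvalues, a pinching `P(X) = ∑ᵢ Dᵢ X Dᵢ`
(diagonal orthogonal 0/1 projections summing to `I`), and a symmetric block diagonal
matrix `A` (i.e. `P(A) = A`), we have `h(A X A) ≤ h(A P(X) A)` for all symmetric `X`. -/
theorem traceFun_sandwich_pinch {n m : ℕ} (h : ℝ → ℝ) (hc : Continuous h)
    (hconc : ConcaveOn ℝ Set.univ h)
    (D : Fin m → Matrix (Fin n) (Fin n) ℝ)
    (hdiag : ∀ i, (D i).IsDiag)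
    (h01 : ∀ i k, D i k k = 0 ∨ D i k k = 1)
    (hsum : ∑ i, D i = 1)
    (horth : ∀ i j, i ≠ j → D i * D j = 0)
    (A : Matrix (Fin n) (Fin n) ℝ) (hA : A.IsHermitian)
    (hAblock : ∑ i, D i * A * D i = A)
    (X : Matrix (Fin n) (Fin n) ℝ) (hX : X.IsHermitian) :
    ∑ j, h ((sandwich_herm A X hA hX).eigenvalues j)
      ≤ ∑ j, h ((sandwich_herm A (∑ i, D i * X * D i) hA
          (isHermitian_sum_fin (fun i => D i * X * D i)
            (fun i => sandwich_herm (D i) X (diag_herm (D i) (hdiag i)) hX))).eigenvalues j) := by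
  classical
  have hDidem : ∀ i, D i * D i = D i := by
    intro i
    ext a b
    rw [Matrix.mul_apply]
    rw [Finset.sum_eq_single a (fun c _ hc => by rw [hdiag i (Ne.symm hc), zero_mul])
      (fun hm => absurd (Finset.mem_univ a) hm)]
    by_cases hab : a = b
    · subst hab
      rcases h01 i a with h0 | h1
      · rw [h0, zero_mul]
      · rw [h1, one_mul]
    · rw [hdiag i hab, mul_zero]
  have hDD : ∑ i, D i * D i = 1 := by
    rw [Finset.sum_congr rfl fun i _ => hDidem i, hsum]
  have hcomm : ∀ i, D i * A = A * D i := by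
    intro i
    have hL : D i * A = D i * A * D i := by
      conv_lhs => rw [← hAblock, Finset.mul_sum]
      rw [Finset.sum_eq_single i
        (fun j _ hji => by rw [← mul_assoc, ← mul_assoc, horth i j (Ne.symm hji), zero_mul, zero_mul])
        (fun hm => absurd (Finset.mem_univ i) hm)]
      rw [← mul_assoc, ← mul_assoc, hDidem i]
    have hR : A * D i = D i * A * D i := by
      conv_lhs => rw [← hAblock, Finset.sum_mul]
      rw [Finset.sum_eq_single i
        (fun j _ hji => by rw [mul_assoc, horth j i hji, mul_zero])
        (fun hm => absurd (Finset.mem_univ i) hm)]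
      rw [mul_assoc, hDidem i]
    rw [hL, hR]
  have e : ∑ i, D i * (A * X * A) * D i = A * (∑ i, D i * X * D i) * A := by
    rw [Finset.mul_sum, Finset.sum_mul]
    refine Finset.sum_congr rfl fun i _ => ?_
    calc D i * (A * X * A) * D i
        = (D i * A) * X * (A * D i) := by simp only [mul_assoc]
      _ = (A * D i) * X * (D i * A) := by rw [hcomm i]
      _ = A * (D i * X * D i) * A := by simp only [mul_assoc]
  set P2 := (sandwich_herm A (∑ i, D i * X * D i) hA
          (isHermitian_sum_fin (fun i => D i * X * D i)
            (fun i => sandwich_herm (D i) X (diag_herm (D i) (hdiag i)) hX))) with hP2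
  have hPY : (∑ i, D i * (A * X * A) * D i).IsHermitian := e ▸ P2
  have main := pinch_trace_le h hconc D (fun i => diag_herm (D i) (hdiag i)) hDD
    (A * X * A) (sandwich_herm A X hA hX) hPY
  rwa [eig_congr_s13 hPY P2 e] at main
end
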